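/- arXiv:1103.4584 — 3 statements merged into one kernel-verified Lean document; each statement's English description precedes it below -/
import Mathlib

section
/- Let F ⊆ ℝ^n be a nonempty convex polyhedron and let U, V ⊆ ℝ^n be polyhedra. Let W ⊆ ℝ^n be a finite union of convex polyhedra such that U ⊆ W and, for all convex polyhedra P ⊆ ℝ^n \ V and Q ⊆ W, P ∩ preflow_F(bound(P, Q) ∩ preflow_F(Q)) ⊆ W. Then rwa_F(U, V) ⊆ W. -/
open Set

/-- Points of `ℝ^n`. -/
abbrev Vec (n : ℕ) := Fin n → ℝ

/-- A (strict or non-strict) affine half-space of `ℝ^ι`. -/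
def IsHalfspace {ι : Type} [Fintype ι] (H : Set (ι → ℝ)) : Prop :=
  ∃ (a : ι → ℝ) (b : ℝ), H = {x | (∑ i, a i * x i) < b} ∨ H = {x | (∑ i, a i * x i) ≤ b}

/-- A convex polyhedron: a finite intersection of half-spaces. -/
def IsConvexPolyhedron {ι : Type} [Fintype ι] (P : Set (ι → ℝ)) : Prop :=
  ∃ (k : ℕ) (Hs : Fin k → Set (ι → ℝ)), (∀ i, IsHalfspace (Hs i)) ∧ P = ⋂ i, Hs i

/-- A polyhedron: a finite union of convex polyhedra. -/
def IsPolyhedron {ι : Type} [Fintype ι] (G : Set (ι → ℝ)) : Prop :=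
  ∃ (k : ℕ) (Ps : Fin k → Set (ι → ℝ)), (∀ i, IsConvexPolyhedron (Ps i)) ∧ G = ⋃ i, Ps i

/-- The pre-flow of `G` with respect to `F`:
`preflow_F(G) = {u | ∃ δ ≥ 0, ∃ c ∈ F, u + δ·c ∈ G}`. -/
def preflow {n : ℕ} (F G : Set (Vec n)) : Set (Vec n) :=
  {u | ∃ δ : ℝ, 0 ≤ δ ∧ ∃ c ∈ F, u + δ • c ∈ G}

/-- The boundary of two sets: `bound(G, G') = (closure G ∩ G') ∪ (G ∩ closure G')`. -/
def bnd {n : ℕ} (G G' : Set (Vec n)) : Set (Vec n) :=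
  (closure G ∩ G') ∪ (G ∩ closure G')

/-- `prwa_F(U, V)`: the points from which a piecewise straight-line trajectory with slopes
in `F` reaches `U`, every point along the way (except possibly the final one) lying in
`(ℝ^n \ V) ∪ U`. -/
def prwa {n : ℕ} (F U V : Set (Vec n)) : Set (Vec n) :=
  {u | ∃ (k : ℕ) (d : Fin k → ℝ) (c : Fin k → Vec n) (p : Fin (k + 1) → Vec n),
    (∀ i, 0 ≤ d i) ∧ (∀ i, c i ∈ F) ∧ p 0 = u ∧
    (∀ i : Fin k, p i.succ = p i.castSucc + d i • c i) ∧
    p (Fin.last k) ∈ U ∧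
    ∀ (i : Fin k) (t : ℝ), 0 ≤ t → t ≤ d i →
      p i.castSucc + t • c i = p (Fin.last k) ∨ p i.castSucc + t • c i ∈ Vᶜ ∪ U}

/-- `rwa_F(U, V)`: the points from which some differentiable trajectory with derivative in
`F` may reach `U` while staying in `(ℝ^n \ V) ∪ U` beforehand. -/
def rwaSet {n : ℕ} (F U V : Set (Vec n)) : Set (Vec n) :=
  {u | ∃ f : ℝ → Vec n, Differentiable ℝ f ∧ f 0 = u ∧ (∀ t, 0 ≤ t → deriv f t ∈ F) ∧
    ∃ δ : ℝ, 0 ≤ δ ∧ f δ ∈ U ∧ ∀ δ', 0 ≤ δ' → δ' < δ → f δ' ∈ Vᶜ ∪ U}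

/-!
Cut `ℝ^n` into the finitely many cells on which membership in each half-space defining `V` or `W`
is constant: the cells are convex polyhedra, and `V`, `W` are unions of cells. Along a trajectory
`f` that reaches `U` at time `δ`, let `τ` be the least time after which `f` stays in `W` up to `δ`.
Some cell `Q ⊆ W` is visited at times accumulating at `τ` from the right, so `f τ ∈ closure Q`,
and by the mean value theorem, applied to each half-space defining `F`, the chord from `f τ` to a
later point of `Q` has its direction in `F`; the hypothesis with `P = {f τ}` gives `f τ ∈ W`.
Just before `τ` the trajectory lies in cells `P ⊆ Vᶜ` that recur arbitrarily close to `τ`, and the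
hypothesis with `Q = {f τ}` puts those points in `W`. Hence `τ = 0`.
-/

open Filter Topology

section Polyhedra

variable {ι : Type} [Fintype ι]

lemma IsHalfspace.compl {H : Set (ι → ℝ)} (h : IsHalfspace H) : IsHalfspace Hᶜ := by
  obtain ⟨a, b, rfl | rfl⟩ := h
  · exact ⟨-a, -b, Or.inr (by ext x; simp)⟩
  · exact ⟨-a, -b, Or.inl (by ext x; simp)⟩

lemma isHalfspace_smul_coord_le (i : ι) (a b : ℝ) : IsHalfspace {x : ι → ℝ | a * x i ≤ b} := by
  classical
  exact ⟨Pi.single i a, b, Or.inr (by ext x; simp [Pi.single_apply])⟩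

lemma isConvexPolyhedron_iInter {J : Type} [Finite J] {Hs : J → Set (ι → ℝ)}
    (h : ∀ j, IsHalfspace (Hs j)) : IsConvexPolyhedron (⋂ j, Hs j) := by
  obtain ⟨k, ⟨e⟩⟩ := Finite.exists_equiv_fin J
  exact ⟨k, Hs ∘ e.symm, fun _ => h _, (e.symm.surjective.iInter_comp Hs).symm⟩

lemma isConvexPolyhedron_singleton (p : ι → ℝ) : IsConvexPolyhedron {p} := by
  have : ({p} : Set (ι → ℝ)) =
      ⋂ j : ι × Bool, {x | (if j.2 then 1 else -1) * x j.1 ≤ (if j.2 then 1 else -1) * p j.1} := by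
    ext x
    simp only [mem_singleton_iff, mem_iInter, mem_ofPred_eq, Prod.forall, Bool.forall_bool,
      if_true, if_false, one_mul, neg_one_mul, neg_le_neg_iff, Bool.false_eq_true]
    exact ⟨by rintro rfl; simp, fun h => funext fun i => le_antisymm (h i).2 (h i).1⟩
  rw [this]
  exact isConvexPolyhedron_iInter fun j => isHalfspace_smul_coord_le _ _ _

lemma IsPolyhedron.exists_finite_halfspaces {G : Set (ι → ℝ)} (hG : IsPolyhedron G) :
    ∃ S : Set (Set (ι → ℝ)), S.Finite ∧ (∀ H ∈ S, IsHalfspace H) ∧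
      ∀ x y, (∀ H ∈ S, x ∈ H ↔ y ∈ H) → x ∈ G → y ∈ G := by
  obtain ⟨k, Ps, hPs, rfl⟩ := hG
  choose m Hs hHs hPeq using hPs
  refine ⟨range fun j : Σ i, Fin (m i) => Hs j.1 j.2, finite_range _,
    forall_mem_range.2 fun j => hHs _ _, fun x y hxy hx => ?_⟩
  obtain ⟨i, hi⟩ := mem_iUnion.1 hx
  rw [hPeq i, mem_iInter] at hi
  exact mem_iUnion.2 ⟨i, hPeq i ▸ mem_iInter.2 fun l => (hxy _ ⟨⟨i, l⟩, rfl⟩).1 (hi l)⟩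

/-- The cell of `x` in the arrangement `S` is the fiber of `memPattern S` through `x`. -/
def memPattern {E : Type} (S : Set (Set E)) (x : E) : S → Prop := fun H => x ∈ (H : Set E)

lemma isConvexPolyhedron_memPattern_fiber {S : Set (Set (ι → ℝ))} [Finite S]
    (hS : ∀ H ∈ S, IsHalfspace H) (q : S → Prop) :
    IsConvexPolyhedron (memPattern S ⁻¹' {q}) := by
  classical
  have : memPattern S ⁻¹' {q} = ⋂ H : S, if q H then (H : Set (ι → ℝ)) else (H : Set _)ᶜ := by
    ext x
    simp only [mem_preimage, mem_singleton_iff, mem_iInter, funext_iff, memPattern, eq_iff_iff]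
    refine forall_congr' fun H => ?_
    split_ifs with h <;> simp [h]
  rw [this]
  refine isConvexPolyhedron_iInter fun H => ?_
  split_ifs
  exacts [hS H H.2, (hS H H.2).compl]

lemma IsHalfspace.slope_mem {H : Set (ι → ℝ)} (hH : IsHalfspace H)
    {f f' : ℝ → ι → ℝ} {s t : ℝ} (hst : s < t) (hfc : ContinuousOn f (Icc s t))
    (hf : ∀ r ∈ Ioo s t, HasDerivAt f (f' r) r) (hf' : ∀ r ∈ Ioo s t, f' r ∈ H) :
    (t - s)⁻¹ • (f t - f s) ∈ H := by
  obtain ⟨a, b, hab⟩ := hH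
  have hφ : ∀ r ∈ Ioo s t, HasDerivAt (fun r => ∑ i, a i * f r i) (∑ i, a i * f' r i) r :=
    fun r hr => HasDerivAt.fun_sum fun i _ => ((hasDerivAt_pi.1 (hf r hr)) i).const_mul (a i)
  have hφc : ContinuousOn (fun r => ∑ i, a i * f r i) (Icc s t) :=
    continuousOn_finsetSum _ fun i _ => (continuousOn_pi.1 hfc i).const_smul (a i)
  obtain ⟨ξ, hξ, hslope⟩ := exists_hasDerivAt_eq_slope _ _ hst hφc hφ
  have hsum : ∑ i, a i * ((t - s)⁻¹ • (f t - f s)) i = ∑ i, a i * f' ξ i := by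
    rw [hslope, div_eq_inv_mul, ← Finset.sum_sub_distrib, Finset.mul_sum]
    refine Finset.sum_congr rfl fun i _ => ?_
    simp only [Pi.smul_apply, Pi.sub_apply, smul_eq_mul]
    ring
  have := hf' ξ hξ
  rcases hab with rfl | rfl <;> simpa only [mem_ofPred_eq, hsum] using this

lemma IsConvexPolyhedron.slope_mem {P : Set (ι → ℝ)} (hP : IsConvexPolyhedron P)
    {f f' : ℝ → ι → ℝ} {s t : ℝ} (hst : s < t) (hfc : ContinuousOn f (Icc s t))
    (hf : ∀ r ∈ Ioo s t, HasDerivAt f (f' r) r) (hf' : ∀ r ∈ Ioo s t, f' r ∈ P) : (t - s)⁻¹ • (f t - f s) ∈ P := by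
  obtain ⟨k, Hs, hHs, rfl⟩ := hP
  exact mem_iInter.2 fun i =>
    (hHs i).slope_mem hst hfc hf fun r hr => mem_iInter.1 (hf' r hr) i

end Polyhedra

lemma Filter.eventually_frequently_eq {α β : Type*} [Finite β] (l : Filter α) (g : α → β) :
    ∀ᶠ a in l, ∃ᶠ b in l, g b = g a := by
  have : ∀ᶠ a in l, ∀ p, (∃ᶠ b in l, g b = p) ∨ g a ≠ p := by
    refine eventually_all.2 fun p => ?_
    by_cases h : ∃ᶠ b in l, g b = p
    · exact Eventually.of_forall fun _ => Or.inl h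
    · exact (not_frequently.1 h).mono fun _ => Or.inr
  exact this.mono fun a ha => (ha (g a)).resolve_right (not_not.2 rfl)

section Preflow

variable {n : ℕ} {F G : Set (Vec n)}

lemma preflow_mono {G' : Set (Vec n)} (h : G ⊆ G') : preflow F G ⊆ preflow F G' :=
  fun _ ⟨δ, hδ, c, hc, hu⟩ => ⟨δ, hδ, c, hc, h hu⟩

lemma subset_preflow (hF : F.Nonempty) : G ⊆ preflow F G :=
  fun u hu => ⟨0, le_rfl, hF.some, hF.some_mem, by simpa using hu⟩

lemma mem_preflow_of_deriv_mem (hF : IsConvexPolyhedron F) {f : ℝ → Vec n}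
    (hf : Differentiable ℝ f) {s t : ℝ} (hst : s < t) (hd : ∀ r ∈ Ioo s t, deriv f r ∈ F)
    (ht : f t ∈ G) : f s ∈ preflow F G := by
  refine ⟨t - s, (sub_pos.2 hst).le, _,
    hF.slope_mem hst hf.continuous.continuousOn (fun r _ => (hf r).hasDerivAt) hd, ?_⟩
  rwa [smul_smul, mul_inv_cancel₀ (sub_pos.2 hst).ne', one_smul, add_sub_cancel]

end Preflow

lemma mem_of_backward_induction {S : Set ℝ} {a b : ℝ} (hab : a ≤ b) (hb : b ∈ S)
    (hright : ∀ t ∈ Ico a b, Ioc t b ⊆ S → t ∈ S)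
    (hleft : ∀ t ∈ Ioc a b, t ∈ S → ∀ᶠ s in 𝓝[<] t, s ∈ S) : a ∈ S := by
  set A := {t ∈ Icc a b | Icc t b ⊆ S}
  have hbA : b ∈ A := ⟨⟨hab, le_rfl⟩, by simpa using hb⟩
  have hbdd : BddBelow A := ⟨a, fun t ht => ht.1.1⟩
  set τ := sInf A
  have haτ : a ≤ τ := le_csInf ⟨b, hbA⟩ fun t ht => ht.1.1
  have hτb : τ ≤ b := csInf_le hbdd hbA
  have hIoc : Ioc τ b ⊆ S := fun s hs => by
    obtain ⟨t, ht, hts⟩ := exists_lt_of_csInf_lt ⟨b, hbA⟩ hs.1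
    exact ht.2 ⟨hts.le, hs.2⟩
  have hτ : τ ∈ S := by
    rcases hτb.lt_or_eq with h | h
    · exact hright τ ⟨haτ, h⟩ hIoc
    · exact h ▸ hb
  rcases haτ.eq_or_lt with h | h
  · exact h ▸ hτ
  obtain ⟨l, hl, hlS⟩ := mem_nhdsLT_iff_exists_Ioo_subset.1 (hleft τ ⟨h, hτb⟩ hτ)
  obtain ⟨t, ht, htτ⟩ := exists_between (max_lt h hl)
  have htA : t ∈ A := by
    refine ⟨⟨(le_max_left _ _).trans ht.le, htτ.le.trans hτb⟩, fun s hs => ?_⟩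
    rcases lt_or_ge s τ with hsτ | hτs
    · exact hlS ⟨(le_max_right _ _).trans_lt (ht.trans_le hs.1), hsτ⟩
    · rcases hτs.eq_or_lt with rfl | hτs
      exacts [hτ, hIoc ⟨hτs, hs.2⟩]
  exact absurd htτ (csInf_le hbdd htA).not_gt

section

variable {n : ℕ} {F V W : Set (Vec n)}

def StepClosed (F V W : Set (Vec n)) : Prop :=
  ∀ P Q : Set (Vec n), IsConvexPolyhedron P → P ⊆ Vᶜ → IsConvexPolyhedron Q → Q ⊆ W →
    P ∩ preflow F (bnd P Q ∩ preflow F Q) ⊆ W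

namespace StepClosed

lemma mem_of_mem_closure (hcl : StepClosed F V W) (hFne : F.Nonempty) {x : Vec n}
    (hxV : x ∉ V) {Q : Set (Vec n)} (hQ : IsConvexPolyhedron Q) (hQW : Q ⊆ W)
    (hxQ : x ∈ closure Q) (hx : x ∈ preflow F Q) : x ∈ W :=
  hcl {x} Q (isConvexPolyhedron_singleton x) (singleton_subset_iff.2 hxV) hQ hQW
    ⟨rfl, subset_preflow hFne ⟨Or.inr ⟨rfl, hxQ⟩, hx⟩⟩

lemma mem_of_mem_preflow_singleton (hcl : StepClosed F V W) (hFne : F.Nonempty)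
    {P : Set (Vec n)} (hP : IsConvexPolyhedron P) (hPV : P ⊆ Vᶜ) {x y : Vec n} (hxP : x ∈ P)
    (hyW : y ∈ W) (hyP : y ∈ closure P) (hxy : x ∈ preflow F {y}) : x ∈ W :=
  hcl P {y} hP hPV (isConvexPolyhedron_singleton y) (singleton_subset_iff.2 hyW)
    ⟨hxP, preflow_mono (by rintro _ rfl; exact ⟨Or.inl ⟨hyP, rfl⟩, subset_preflow hFne rfl⟩)
      hxy⟩

variable {f : ℝ → Vec n}

lemma mem_of_frequently_right (hcl : StepClosed F V W) (hF : IsConvexPolyhedron F)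
    (hFne : F.Nonempty) (hf : Differentiable ℝ f) {τ : ℝ} (hd : ∀ r, τ < r → deriv f r ∈ F)
    (hτV : f τ ∉ V) {Q : Set (Vec n)} (hQ : IsConvexPolyhedron Q) (hQW : Q ⊆ W)
    (hfreq : ∃ᶠ r in 𝓝[>] τ, f r ∈ Q) : f τ ∈ W := by
  obtain ⟨s, hsQ, hτs⟩ := (hfreq.and_eventually self_mem_nhdsWithin).exists
  exact hcl.mem_of_mem_closure hFne hτV hQ hQW
    (mem_closure_iff_frequently.2 (hf.continuous.continuousWithinAt.tendsto.frequently hfreq))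
    (mem_preflow_of_deriv_mem hF hf hτs (fun r hr => hd r hr.1) hsQ)

lemma mem_of_frequently_left (hcl : StepClosed F V W) (hF : IsConvexPolyhedron F)
    (hFne : F.Nonempty) (hf : Differentiable ℝ f) {s τ : ℝ} (hsτ : s < τ)
    (hd : ∀ r ∈ Ioo s τ, deriv f r ∈ F) {P : Set (Vec n)} (hP : IsConvexPolyhedron P)
    (hPV : P ⊆ Vᶜ) (hfs : f s ∈ P) (hfreq : ∃ᶠ r in 𝓝[<] τ, f r ∈ P) (hτW : f τ ∈ W) :
    f s ∈ W :=
  hcl.mem_of_mem_preflow_singleton hFne hP hPV hfs hτW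
    (mem_closure_iff_frequently.2 (hf.continuous.continuousWithinAt.tendsto.frequently hfreq))
    (mem_preflow_of_deriv_mem hF hf hsτ hd rfl)

theorem rwaSet_subset {U : Set (Vec n)} (hcl : StepClosed F V W) (hF : IsConvexPolyhedron F)
    (hFne : F.Nonempty) (hUW : U ⊆ W) {ι : Type} [Finite ι] (κ : Vec n → ι)
    (hκ : ∀ i, IsConvexPolyhedron (κ ⁻¹' {i})) (hκV : ∀ x y, κ x = κ y → x ∈ V → y ∈ V)
    (hκW : ∀ x y, κ x = κ y → x ∈ W → y ∈ W) : rwaSet F U V ⊆ W := by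
  rintro _ ⟨f, hf, rfl, hd, δ, hδ, hfδ, havoid⟩
  refine mem_of_backward_induction (S := f ⁻¹' W) hδ (hUW hfδ)
    (fun t ht hW => ?_) (fun t ht htW => ?_)
  · rcases havoid t ht.1 ht.2 with htV | htU
    · obtain ⟨s, hsW, hfreq⟩ :=
        (Eventually.and (mem_of_superset (Ioc_mem_nhdsGT ht.2) hW)
          (eventually_frequently_eq _ (κ ∘ f))).exists
      exact hcl.mem_of_frequently_right hF hFne hf (fun r hr => hd r (ht.1.trans hr.le)) htV
        (hκ _) (fun y hy => hκW _ _ hy.symm hsW) hfreq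
    · exact hUW htU
  · filter_upwards [Ioo_mem_nhdsLT ht.1, eventually_frequently_eq (𝓝[<] t) (κ ∘ f)]
      with s hs hfreq
    rcases havoid s hs.1.le (hs.2.trans_le ht.2) with hsV | hsU
    · exact hcl.mem_of_frequently_left hF hFne hf hs.2 (fun r hr => hd r (hs.1.le.trans hr.1.le))
        (hκ _) (fun y hy hyV => hsV (hκV _ _ hy hyV)) rfl hfreq htW
    · exact hUW hsU

end StepClosed

end

theorem rwa_subset_closed_general {n : ℕ} (F U V W : Set (Vec n))
    (hF : IsConvexPolyhedron F) (hFne : F.Nonempty)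
    (hV : IsPolyhedron V)
    (hW : IsPolyhedron W) (hUW : U ⊆ W)
    (hcl : ∀ P Q : Set (Vec n), IsConvexPolyhedron P → P ⊆ Vᶜ →
      IsConvexPolyhedron Q → Q ⊆ W →
      P ∩ preflow F (bnd P Q ∩ preflow F Q) ⊆ W) :
    rwaSet F U V ⊆ W := by
  obtain ⟨SV, hSV, hSVH, hVsat⟩ := hV.exists_finite_halfspaces
  obtain ⟨SW, hSW, hSWH, hWsat⟩ := hW.exists_finite_halfspaces
  have : Finite ↥(SV ∪ SW) := (hSV.union hSW).to_subtype
  refine StepClosed.rwaSet_subset hcl hF hFne hUW (memPattern (SV ∪ SW))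
    (isConvexPolyhedron_memPattern_fiber fun H hH => hH.elim (hSVH H) (hSWH H)) ?_ ?_
  · exact fun x y hxy => hVsat x y fun H hH => (congrFun hxy ⟨H, Or.inl hH⟩).to_iff
  · exact fun x y hxy => hWsat x y fun H hH => (congrFun hxy ⟨H, Or.inr hH⟩).to_iff

/-- If `W` is a finite union of convex polyhedra containing `U` that is
closed under the refinement step
`P ∩ preflow_F(bound(P, Q) ∩ preflow_F(Q)) ⊆ W` for all convex polyhedra `P ⊆ ℝ^n \ V`
and `Q ⊆ W`, then `rwa_F(U, V) ⊆ W`. -/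
theorem rwa_subset_closed {n : ℕ} (F U V W : Set (Vec n))
    (hF : IsConvexPolyhedron F) (hFne : F.Nonempty)
    (hU : IsPolyhedron U) (hV : IsPolyhedron V)
    (hW : IsPolyhedron W) (hUW : U ⊆ W)
    (hcl : ∀ P Q : Set (Vec n), IsConvexPolyhedron P → P ⊆ Vᶜ →
      IsConvexPolyhedron Q → Q ⊆ W →
      P ∩ preflow F (bnd P Q ∩ preflow F Q) ⊆ W) :
    rwaSet F U V ⊆ W :=
  rwa_subset_closed_general F U V W hF hFne hV hW hUW hcl
end

section
/- Let F ⊆ ℝ^n be a nonempty convex polyhedron and U, V ⊆ ℝ^n polyhedra. Let 𝒫 be a finite family of convex polyhedra with ⋃𝒫 = ℝ^n \ V, and let 𝒬 be a finite family of convex polyhedra with ⋃𝒬 = prwa_F(U, V). Then prwa_F(U, V) is a fixpoint of the operator τ: U ∪ ⋃_{P ∈ 𝒫} ⋃_{Q ∈ 𝒬} ( P ∩ preflow_F(bound(P, Q) ∩ preflow_F(Q)) ) = prwa_F(U, V). -/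
open Set

lemma halfspace_seg {ι : Type} [Fintype ι] {H : Set (ι → ℝ)} (hH : IsHalfspace H)
    {x y : ι → ℝ} (hx : x ∈ H) (hy : y ∈ closure H) {s : ℝ} (h0 : 0 ≤ s) (h1 : s < 1) :
    x + s • (y - x) ∈ H := by
  obtain ⟨a, b, hlt | hle⟩ := hH
  all_goals subst H
  all_goals
    have hcont : Continuous fun z : ι → ℝ => ∑ i, a i * z i :=
      continuous_finset_sum _ fun i _ => (continuous_const.mul (continuous_apply i))
  all_goals
    have hcombo : (∑ i, a i * ((x + s • (y - x)) i)) =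
        (1 - s) * (∑ i, a i * x i) + s * (∑ i, a i * y i) := by
      have h : ∀ i ∈ Finset.univ, a i * ((x + s • (y - x)) i)
          = (1 - s) * (a i * x i) + s * (a i * y i) := by
        intro i _
        simp only [Pi.add_apply, Pi.smul_apply, Pi.sub_apply, smul_eq_mul]
        ring
      rw [Finset.sum_congr rfl h, Finset.sum_add_distrib, ← Finset.mul_sum, ← Finset.mul_sum]
  · have hy' : (∑ i, a i * y i) ≤ b := by
      have hcl : closure {z : ι → ℝ | (∑ i, a i * z i) < b} ⊆ {z | (∑ i, a i * z i) ≤ b} :=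
        closure_minimal (fun z hz => show (∑ i, a i * z i) ≤ b from le_of_lt hz) (isClosed_le hcont continuous_const)
      exact hcl hy
    have hx' : (∑ i, a i * x i) < b := hx
    show (∑ i, a i * ((x + s • (y - x)) i)) < b
    rw [hcombo]
    nlinarith [mul_nonneg h0 (sub_nonneg.mpr hy')]
  · have hy' : (∑ i, a i * y i) ≤ b :=
      (isClosed_le hcont continuous_const).closure_subset hy
    have hx' : (∑ i, a i * x i) ≤ b := hx
    show (∑ i, a i * ((x + s • (y - x)) i)) ≤ b
    rw [hcombo]
    nlinarith [mul_nonneg h0 (sub_nonneg.mpr hy')]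

lemma cpoly_seg {ι : Type} [Fintype ι] {P : Set (ι → ℝ)} (hP : IsConvexPolyhedron P)
    {x y : ι → ℝ} (hx : x ∈ P) (hy : y ∈ closure P) {s : ℝ} (h0 : 0 ≤ s) (h1 : s < 1) :
    x + s • (y - x) ∈ P := by
  obtain ⟨k, Hs, hH, rfl⟩ := hP
  rw [mem_iInter] at hx ⊢
  intro i
  exact halfspace_seg (hH i) (hx i) (closure_mono (Set.iInter_subset Hs i) hy) h0 h1

lemma segP {n : ℕ} {P : Set (Vec n)} (hP : IsConvexPolyhedron P) {u c : Vec n} {δ t : ℝ}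
    (hu : u ∈ P) (hw : u + δ • c ∈ closure P) (ht0 : 0 ≤ t) (htδ : t < δ) :
    u + t • c ∈ P := by
  have hδ : 0 < δ := lt_of_le_of_lt ht0 htδ
  have h := cpoly_seg hP hu hw (s := t / δ) (div_nonneg ht0 hδ.le) ((div_lt_one hδ).mpr htδ)
  have heq : u + (t / δ) • ((u + δ • c) - u) = u + t • c := by
    rw [add_sub_cancel_left, smul_smul, div_mul_cancel₀ t hδ.ne']
  rwa [heq] at h

lemma segQ {n : ℕ} {Q : Set (Vec n)} (hQ : IsConvexPolyhedron Q) {u c : Vec n} {δ t : ℝ}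
    (hu : u ∈ closure Q) (hw : u + δ • c ∈ Q) (ht0 : 0 < t) (htδ : t ≤ δ) :
    u + t • c ∈ Q := by
  have hδ : 0 < δ := lt_of_lt_of_le ht0 htδ
  have hs0 : 0 ≤ 1 - t / δ := by
    have : t / δ ≤ 1 := (div_le_one hδ).mpr htδ
    linarith
  have hs1 : 1 - t / δ < 1 := by
    have : 0 < t / δ := div_pos ht0 hδ
    linarith
  have h := cpoly_seg hQ hw hu (s := 1 - t / δ) hs0 hs1
  have heq : (u + δ • c) + (1 - t / δ) • (u - (u + δ • c)) = u + t • c := by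
    have hδ' : δ ≠ 0 := hδ.ne'
    match_scalars
    · ring
    · field_simp
      ring
  rwa [heq] at h

lemma mem_prwa_of_mem {n : ℕ} (F U V : Set (Vec n)) {u : Vec n} (hu : u ∈ U) :
    u ∈ prwa F U V :=
  ⟨0, Fin.elim0, Fin.elim0, fun _ => u, fun i => i.elim0, fun i => i.elim0, rfl,
    fun i => i.elim0, hu, fun i => i.elim0⟩

lemma prwa_sub {n : ℕ} (F U V : Set (Vec n)) : prwa F U V ⊆ Vᶜ ∪ U := by
  rintro u ⟨k, d, c, p, hd, hc, hp0, hstep, hlast, hseg⟩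
  cases k with
  | zero =>
    right
    rw [Fin.last_zero, hp0] at hlast
    exact hlast
  | succ m =>
    have h := hseg 0 0 le_rfl (hd 0)
    simp only [zero_smul, add_zero, Fin.castSucc_zero] at h
    rcases h with h | h
    · right; rw [← hp0, h]; exact hlast
    · rw [hp0] at h; exact h

lemma prwa_prepend {n : ℕ} {F U V : Set (Vec n)} {u c : Vec n} {δ : ℝ}
    (hδ : 0 ≤ δ) (hc : c ∈ F)
    (hmid : ∀ t, 0 ≤ t → t < δ → u + t • c ∈ Vᶜ ∪ U)
    (hw : u + δ • c ∈ prwa F U V) : u ∈ prwa F U V := by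
  have hw' : u + δ • c ∈ Vᶜ ∪ U := prwa_sub F U V hw
  obtain ⟨k, d, cs, p, hd, hcs, hp0, hstep, hlast, hseg⟩ := hw
  refine ⟨k + 1, Fin.cons δ d, Fin.cons c cs, Fin.cons u p, ?_, ?_, ?_, ?_, ?_, ?_⟩
  · intro i
    induction i using Fin.cases with
    | zero => simpa using hδ
    | succ j => simpa using hd j
  · intro i
    induction i using Fin.cases with
    | zero => simpa using hc
    | succ j => simpa using hcs j
  · simp
  · intro i
    induction i using Fin.cases with
    | zero => simp [hp0]
    | succ j =>
      simp only [Fin.cons_succ, ← Fin.succ_castSucc]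
      exact hstep j
  · rw [← Fin.succ_last, Fin.cons_succ]
    exact hlast
  · intro i t ht0 htd
    rw [← Fin.succ_last, Fin.cons_succ]
    induction i using Fin.cases with
    | zero =>
      simp only [Fin.castSucc_zero, Fin.cons_zero, Fin.cons_succ] at htd ⊢
      rcases lt_or_eq_of_le htd with hlt | heq
      · exact Or.inr (hmid t ht0 hlt)
      · subst heq
        rw [← hp0] at hw'
        cases k with
        | zero =>
          left
          rw [← hp0, Fin.last_zero]
        | succ m => exact Or.inr (hp0 ▸ hw')
    | succ j =>
      simp only [Fin.cons_succ, ← Fin.succ_castSucc] at htd ⊢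
      exact hseg j t ht0 htd

/-- If `PP` is a finite family of convex polyhedra with `⋃PP = ℝ^n \ V`
and `QQ` a finite family of convex polyhedra with `⋃QQ = prwa_F(U, V)`, then
`prwa_F(U, V)` is a fixpoint of the operator `τ`. -/
theorem prwa_fixpoint {n : ℕ} (F U V : Set (Vec n))
    (hF : IsConvexPolyhedron F) (hFne : F.Nonempty)
    (hU : IsPolyhedron U) (hV : IsPolyhedron V)
    (PP QQ : Set (Set (Vec n)))
    (hPPfin : PP.Finite) (hPP : ∀ P ∈ PP, IsConvexPolyhedron P) (hPPu : ⋃₀ PP = Vᶜ)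
    (hQQfin : QQ.Finite) (hQQ : ∀ Q ∈ QQ, IsConvexPolyhedron Q) (hQQu : ⋃₀ QQ = prwa F U V) :
    U ∪ ⋃ P ∈ PP, ⋃ Q ∈ QQ, P ∩ preflow F (bnd P Q ∩ preflow F Q) = prwa F U V := by
  apply Set.Subset.antisymm
  · rintro u (hu | hu)
    · exact mem_prwa_of_mem F U V hu
    · simp only [mem_iUnion, mem_inter_iff] at hu
      obtain ⟨P, hP, Q, hQ, huP, hupre⟩ := hu
      obtain ⟨δ, hδ0, c, hc, hwb, hwpre⟩ := hupre
      have hPV : P ⊆ Vᶜ := by rw [← hPPu]; exact subset_sUnion_of_mem hP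
      have hQp : Q ⊆ prwa F U V := by rw [← hQQu]; exact subset_sUnion_of_mem hQ
      have hPconv := hPP P hP
      have hQconv := hQQ Q hQ
      rcases hwb with ⟨hwcP, hwQ⟩ | ⟨hwP, hwcQ⟩
      · -- w ∈ closure P ∩ Q
        refine prwa_prepend hδ0 hc (fun t ht0 htδ => ?_) (hQp hwQ)
        exact Or.inl (hPV (segP hPconv huP hwcP ht0 htδ))
      · -- w ∈ P ∩ closure Q
        obtain ⟨δ', hδ'0, c', hc', hz⟩ := hwpre
        have hwprwa : u + δ • c ∈ prwa F U V := by
          refine prwa_prepend hδ'0 hc' (fun t ht0 htδ' => ?_) (hQp hz)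
          rcases eq_or_lt_of_le ht0 with heq | hpos
          · rw [← heq, zero_smul, add_zero]
            exact Or.inl (hPV hwP)
          · exact prwa_sub F U V (hQp (segQ hQconv hwcQ hz hpos htδ'.le))
        refine prwa_prepend hδ0 hc (fun t ht0 htδ => ?_) hwprwa
        exact Or.inl (hPV (segP hPconv huP (subset_closure hwP) ht0 htδ))
  · intro u hu
    rcases prwa_sub F U V hu with hVc | hUmem
    · right
      have huPP : u ∈ ⋃₀ PP := by rw [hPPu]; exact hVc
      have huQQ : u ∈ ⋃₀ QQ := by rw [hQQu]; exact hu
      obtain ⟨P, hP, huP⟩ := huPP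
      obtain ⟨Q, hQ, huQ⟩ := huQQ
      obtain ⟨c0, hc0⟩ := hFne
      simp only [mem_iUnion, mem_inter_iff]
      refine ⟨P, hP, Q, hQ, huP, 0, le_rfl, c0, hc0, ?_, ?_⟩
      · rw [zero_smul, add_zero]
        exact Or.inl ⟨subset_closure huP, huQ⟩
      · rw [zero_smul, add_zero]
        exact ⟨0, le_rfl, c0, hc0, by rw [zero_smul, add_zero]; exact huQ⟩
    · exact Or.inl hUmem
end

section
/- Let π = 𝒢_0 →(P_1,R_1) 𝒢_1 →(P_2,R_2) ⋯ →(P_k,R_k) 𝒢_k be a sequence of refinement steps and let R be an entry region of 𝒢_k such that R ⊄ preflow_F(R_1). Then there exists a sequence of refinement steps starting from 𝒢_0 whose steps form a subsequence of (P_1,R_1), …, (P_k,R_k) containing no step whose entry region equals R_1, such that R is an entry region of its final family. -/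
open Set

/-- `R` is an entry region of the family `𝒢` from the convex polyhedron `P ∈ 𝒫`:
a nonempty set `R = bound(P, Q) ∩ preflow_F(Q)` for some `Q ∈ 𝒢`. -/
def IsEntryRegionFrom {n : ℕ} (F : Set (Vec n)) (GG : Set (Set (Vec n)))
    (P R : Set (Vec n)) : Prop :=
  R.Nonempty ∧ ∃ Q ∈ GG, R = bnd P Q ∩ preflow F Q

/-- `R` is an entry region of the family `𝒢` (w.r.t. the family `𝒫`):
a nonempty set `R = bound(P, Q) ∩ preflow_F(Q)` with `P ∈ 𝒫` and `Q ∈ 𝒢`. -/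
def IsEntryRegion {n : ℕ} (F : Set (Vec n)) (PP GG : Set (Set (Vec n)))
    (R : Set (Vec n)) : Prop :=
  ∃ P ∈ PP, IsEntryRegionFrom F GG P R

/-- The refinement step `𝒢 →(P,R) 𝒢'`: `P ∈ 𝒫`, `R` is an entry region of `𝒢` from `P`,
and `𝒢' = 𝒢 ∪ {P ∩ preflow_F(R)}`. -/
def RefStep {n : ℕ} (F : Set (Vec n)) (PP : Set (Set (Vec n)))
    (GG : Set (Set (Vec n))) (P R : Set (Vec n)) (GG' : Set (Set (Vec n))) : Prop :=
  P ∈ PP ∧ IsEntryRegionFrom F GG P R ∧ GG' = GG ∪ {P ∩ preflow F R}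

/-!
For convex `F`, following `F` twice is following `F` once: `preflow_F(preflow_F(A)) ⊆ preflow_F(A)`.
A polyhedron `P ∩ preflow_F(R_i)` added by step `i` therefore has its pre-flow inside
`preflow_F(R_i)`, which in turn lies inside `preflow_F(Q)` for the polyhedron `Q` of the earlier
family that `R_i` enters. Tracing the polyhedron `Q` behind the final entry region `R` backwards
along these steps, pre-flows only grow; since `preflow_F(Q)` already escapes `preflow_F(R_1)`, no
traced step has entry region `R_1`, and the traced steps alone rebuild `Q` from `𝒢_0`.
-/

lemma IsHalfspace.convex {ι : Type} [Fintype ι] {H : Set (ι → ℝ)} (h : IsHalfspace H) :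
    Convex ℝ H := by
  obtain ⟨a, b, rfl | rfl⟩ := h
  · exact convex_halfSpace_lt (f := (a ⬝ᵥ ·)) ⟨dotProduct_add a, (dotProduct_smul · a)⟩ b
  · exact convex_halfSpace_le (f := (a ⬝ᵥ ·)) ⟨dotProduct_add a, (dotProduct_smul · a)⟩ b

lemma IsConvexPolyhedron.convex {ι : Type} [Fintype ι] {P : Set (ι → ℝ)}
    (h : IsConvexPolyhedron P) : Convex ℝ P := by
  obtain ⟨k, Hs, hHs, rfl⟩ := h
  exact convex_iInter fun i => (hHs i).convex

section Preflow

variable {n : ℕ} {F A B : Set (Vec n)}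

lemma preflow_mono_s13 (h : A ⊆ B) : preflow F A ⊆ preflow F B := by
  rintro u ⟨δ, hδ, c, hc, hu⟩
  exact ⟨δ, hδ, c, hc, h hu⟩

lemma preflow_preflow_subset (hF : Convex ℝ F) : preflow F (preflow F A) ⊆ preflow F A := by
  rintro u ⟨δ, hδ, c, hc, δ', hδ', c', hc', hu⟩
  rcases (add_nonneg hδ hδ').eq_or_lt with hsum | hsum
  · obtain ⟨rfl, rfl⟩ : δ = 0 ∧ δ' = 0 := ⟨by linarith, by linarith⟩
    exact ⟨0, le_rfl, c, hc, by simpa using hu⟩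
  -- the two moves combine into one move along a convex combination of `c` and `c'`
  refine ⟨δ + δ', hsum.le, (δ / (δ + δ')) • c + (δ' / (δ + δ')) • c',
    hF hc hc' (by positivity) (by positivity) (by field_simp), ?_⟩
  have hmove : (δ + δ') • ((δ / (δ + δ')) • c + (δ' / (δ + δ')) • c') = δ • c + δ' • c' := by
    rw [smul_add, smul_smul, smul_smul, mul_div_cancel₀ _ hsum.ne',
      mul_div_cancel₀ _ hsum.ne']
  rwa [hmove, ← add_assoc]

lemma preflow_subset_preflow (hF : Convex ℝ F) (h : A ⊆ preflow F B) :
    preflow F A ⊆ preflow F B :=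
  (preflow_mono_s13 h).trans (preflow_preflow_subset hF)

end Preflow

section PrunedRun

variable {n : ℕ} {F : Set (Vec n)} {PP : Set (Set (Vec n))} {G₀ : Set (Set (Vec n))}
  {Ps Rs : ℕ → Set (Vec n)} {A : Set (Vec n)}

def IsPrunedRun (F : Set (Vec n)) (PP G₀ : Set (Set (Vec n))) (Ps Rs : ℕ → Set (Vec n))
    (A : Set (Vec n)) (i m : ℕ) (ι : ℕ → ℕ) (G' : ℕ → Set (Set (Vec n))) : Prop :=
  (∀ j < m, ι j < i) ∧
  (∀ j₁ j₂, j₁ < j₂ → j₂ < m → ι j₁ < ι j₂) ∧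
  (∀ j < m, Rs (ι j) ≠ A) ∧
  G' 0 = G₀ ∧
  (∀ j < m, RefStep F PP (G' j) (Ps (ι j)) (Rs (ι j)) (G' (j + 1)))

lemma isPrunedRun_nil (i : ℕ) (ι : ℕ → ℕ) :
    IsPrunedRun F PP G₀ Ps Rs A i 0 ι fun _ => G₀ :=
  ⟨by omega, by omega, by omega, rfl, by omega⟩

lemma IsPrunedRun.mono {i i' m : ℕ} {ι : ℕ → ℕ} {G' : ℕ → Set (Set (Vec n))}
    (h : IsPrunedRun F PP G₀ Ps Rs A i m ι G') (hi : i ≤ i') :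
    IsPrunedRun F PP G₀ Ps Rs A i' m ι G' :=
  ⟨fun j hj => (h.1 j hj).trans_le hi, h.2⟩

lemma IsPrunedRun.snoc {i m : ℕ} {ι : ℕ → ℕ} {G' : ℕ → Set (Set (Vec n))}
    {GG : Set (Set (Vec n))} (h : IsPrunedRun F PP G₀ Ps Rs A i m ι G')
    (hstep : RefStep F PP (G' m) (Ps i) (Rs i) GG) (hRs : Rs i ≠ A) :
    IsPrunedRun F PP G₀ Ps Rs A (i + 1) (m + 1) (fun j => if j < m then ι j else i)
      (fun j => if j ≤ m then G' j else GG) := by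
  obtain ⟨hlt, hmono, hne, h0, hsteps⟩ := h
  refine ⟨fun j _ => ?_, fun j₁ j₂ hj hj₂ => ?_, fun j hj => ?_, by simpa using h0,
    fun j hj => ?_⟩
  · dsimp only
    split_ifs with hj
    · exact (hlt j hj).trans (Nat.lt_succ_self i)
    · exact Nat.lt_succ_self i
  · have hj₁ : j₁ < m := by omega
    rcases (Nat.lt_succ_iff.mp hj₂).lt_or_eq with hj₂ | rfl
    · simpa [hj₁, hj₂] using hmono j₁ j₂ hj hj₂
    · simpa [hj₁] using hlt j₁ hj₁
  · dsimp only
    split_ifs with hj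
    exacts [hne j hj, hRs]
  · rcases (Nat.lt_succ_iff.mp hj).lt_or_eq with hj | rfl
    · simpa [hj, hj.le, Nat.succ_le_of_lt hj] using hsteps j hj
    · simpa using hstep

theorem exists_isPrunedRun_of_mem (hF : Convex ℝ F) {G : ℕ → Set (Set (Vec n))} {i : ℕ}
    (hstep : ∀ j < i, RefStep F PP (G j) (Ps j) (Rs j) (G (j + 1)))
    {Q : Set (Vec n)} (hQ : Q ∈ G i) (hQA : ¬ preflow F Q ⊆ preflow F A) :
    ∃ m ι G', IsPrunedRun F PP (G 0) Ps Rs A i m ι G' ∧ Q ∈ G' m := by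
  induction i generalizing Q with
  | zero => exact ⟨0, id, fun _ => G 0, isPrunedRun_nil 0 id, hQ⟩
  | succ i ih =>
    have hstep' : ∀ j < i, RefStep F PP (G j) (Ps j) (Rs j) (G (j + 1)) :=
      fun j hj => hstep j (hj.trans (Nat.lt_succ_self i))
    obtain ⟨hP, ⟨hRne, Q', hQ', hRs⟩, hG⟩ := hstep i (Nat.lt_succ_self i)
    rw [hG] at hQ
    rcases hQ with hQ | rfl
    · obtain ⟨m, ι, G', hrun, hQm⟩ := ih hstep' hQ hQA
      exact ⟨m, ι, G', hrun.mono (Nat.le_succ i), hQm⟩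
    have hQRs : preflow F (Ps i ∩ preflow F (Rs i)) ⊆ preflow F (Rs i) :=
      preflow_subset_preflow hF inter_subset_right
    have hRsQ' : preflow F (Rs i) ⊆ preflow F Q' :=
      preflow_subset_preflow hF (hRs ▸ inter_subset_right)
    have hRsA : Rs i ≠ A := fun h => hQA (h ▸ hQRs)
    obtain ⟨m, ι, G', hrun, hQ'm⟩ := ih hstep' hQ' fun h => hQA ((hQRs.trans hRsQ').trans h)
    exact ⟨m + 1, _, _, hrun.snoc ⟨hP, ⟨hRne, Q', hQ'm, hRs⟩, rfl⟩ hRsA, by simp⟩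

end PrunedRun

theorem prune_refSeq_general {n : ℕ} (F : Set (Vec n)) (hF : IsConvexPolyhedron F)
    (PP : Set (Set (Vec n)))
    (G : ℕ → Set (Set (Vec n))) (Ps Rs : ℕ → Set (Vec n))
    (k : ℕ)
    (hstep : ∀ i < k, RefStep F PP (G i) (Ps i) (Rs i) (G (i + 1)))
    (R : Set (Vec n)) (hR : IsEntryRegion F PP (G k) R)
    (hnsub : ¬ R ⊆ preflow F (Rs 0)) :
    ∃ (m : ℕ) (ι : ℕ → ℕ) (G' : ℕ → Set (Set (Vec n))),
      (∀ j < m, ι j < k) ∧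
      (∀ j₁ j₂, j₁ < j₂ → j₂ < m → ι j₁ < ι j₂) ∧
      (∀ j < m, Rs (ι j) ≠ Rs 0) ∧
      G' 0 = G 0 ∧
      (∀ j < m, RefStep F PP (G' j) (Ps (ι j)) (Rs (ι j)) (G' (j + 1))) ∧
      IsEntryRegion F PP (G' m) R := by
  obtain ⟨P, hP, hRne, Q, hQ, rfl⟩ := hR
  have hQA : ¬ preflow F Q ⊆ preflow F (Rs 0) := fun h => hnsub (inter_subset_right.trans h)
  obtain ⟨m, ι, G', hrun, hQm⟩ := exists_isPrunedRun_of_mem hF.convex hstep hQ hQA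
  exact ⟨m, ι, G', hrun.1, hrun.2.1, hrun.2.2.1, hrun.2.2.2.1, hrun.2.2.2.2,
    P, hP, hRne, Q, hQm, rfl⟩

/-- Pruning lemma: if `π = 𝒢_0 →(P_1,R_1) ⋯ →(P_k,R_k) 𝒢_k` is a
sequence of refinement steps and `R` is an entry region of `𝒢_k` with
`R ⊄ preflow_F(R_1)`, then there is a sequence of refinement steps from `𝒢_0` whose
steps form a subsequence of those of `π` containing no step whose entry region equals
`R_1`, such that `R` is an entry region of its final family. -/
theorem prune_refSeq {n : ℕ} (F : Set (Vec n)) (hF : IsConvexPolyhedron F)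
    (PP : Set (Set (Vec n))) (hPPfin : PP.Finite) (hPP : ∀ P ∈ PP, IsConvexPolyhedron P)
    (G : ℕ → Set (Set (Vec n))) (Ps Rs : ℕ → Set (Vec n))
    (hG0fin : (G 0).Finite) (hG0 : ∀ Q ∈ G 0, IsConvexPolyhedron Q)
    (k : ℕ) (hk : 0 < k)
    (hstep : ∀ i < k, RefStep F PP (G i) (Ps i) (Rs i) (G (i + 1)))
    (R : Set (Vec n)) (hR : IsEntryRegion F PP (G k) R)
    (hnsub : ¬ R ⊆ preflow F (Rs 0)) :
    ∃ (m : ℕ) (ι : ℕ → ℕ) (G' : ℕ → Set (Set (Vec n))),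
      (∀ j < m, ι j < k) ∧
      (∀ j₁ j₂, j₁ < j₂ → j₂ < m → ι j₁ < ι j₂) ∧
      (∀ j < m, Rs (ι j) ≠ Rs 0) ∧
      G' 0 = G 0 ∧
      (∀ j < m, RefStep F PP (G' j) (Ps (ι j)) (Rs (ι j)) (G' (j + 1))) ∧
      IsEntryRegion F PP (G' m) R :=
  prune_refSeq_general F hF PP G Ps Rs k hstep R hR hnsub
end
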